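/- Let Ω, ∂Ω, σ, n be as in the context, and assume in addition that Ω is contained in the closed ball of radius R > 0 centered at the origin. Let φ, ψ : ℝ^d → ℝ be C² on a neighborhood of the closure of Ω, satisfying −Δφ = E_φ·φ and −Δψ = E_ψ·ψ on Ω, with ∫_Ω φ(x)² dx = 1, ∫_Ω ψ(x)² dx = 1 and ∫_Ω φ(x)·ψ(x) dx = 0, and both satisfying Dirichlet boundary conditions: φ = ψ = 0 on ∂Ω with normal gradients there, i.e. ∇φ(x) = ⟨n(x),∇φ(x)⟩·n(x) and ∇ψ(x) = ⟨n(x),∇ψ(x)⟩·n(x) for all x ∈ ∂Ω. Then |∫_{∂Ω} ⟨x,n(x)⟩·⟨n(x),∇φ(x)⟩·⟨n(x),∇ψ(x)⟩ dσ(x)| ≤ (R²/4)·(E_φ − E_ψ)². -/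

import Mathlib

open MeasureTheory
open scoped RealInnerProductSpace Classical

noncomputable section

/-- The Euclidean Laplacian: the sum of the second partial derivatives. -/
def lap {d : ℕ} (u : EuclideanSpace ℝ (Fin d) → ℝ) (x : EuclideanSpace ℝ (Fin d)) : ℝ :=
  ∑ i, fderiv ℝ (fun y => fderiv ℝ u y (EuclideanSpace.single i (1:ℝ))) x
    (EuclideanSpace.single i (1:ℝ))

/-- The divergence: the sum of the partial derivatives of the components. -/
def divg {d : ℕ} (F : EuclideanSpace ℝ (Fin d) → EuclideanSpace ℝ (Fin d))
    (x : EuclideanSpace ℝ (Fin d)) : ℝ :=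
  ∑ i, fderiv ℝ (fun y => ⟪F y, EuclideanSpace.single i (1:ℝ)⟫) x
    (EuclideanSpace.single i (1:ℝ))

/-!
Rellich–Pohozaev identity. The field
`G = ⟪y, ∇φ⟫ ∇ψ + ⟪y, ∇ψ⟫ ∇φ - ⟪∇φ, ∇ψ⟫ y + (terms carrying a factor φ or ψ)`
has, for eigenfunctions, divergence `(Eφ + Eψ) φ ψ + (Eφ - Eψ)² / 4 · ‖y‖² φ ψ`, while the
Dirichlet conditions reduce `⟪G, n⟫` on `∂Ω` to `⟪x, n⟫ ∂ₙφ ∂ₙψ`. By Gauss–Green and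
orthogonality the boundary integral is `(Eφ - Eψ)² / 4 · ∫_Ω ‖x‖² φ ψ`, and
`‖x‖² |φ ψ| ≤ R² (φ² + ψ²) / 2` bounds the last integral by `R²`.
-/

open InnerProductSpace
open scoped Gradient

section Euclidean

variable {d : ℕ}

local notation "E" => EuclideanSpace ℝ (Fin d)
local notation "e" i => (EuclideanSpace.single i (1:ℝ) : EuclideanSpace ℝ (Fin d))

attribute [local fun_prop] DifferentiableAt.inner ContDiffAt.inner

theorem divg_eq_sum_inner_fderiv {F : E → E} {x : E} (hF : DifferentiableAt ℝ F x) :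
    divg F x = ∑ i, ⟪fderiv ℝ F x (e i), e i⟫ := by
  refine Finset.sum_congr rfl fun i _ => ?_
  rw [fderiv_inner_apply ℝ hF (differentiableAt_const _)]
  simp

theorem divg_add {F G : E → E} {x : E} (hF : DifferentiableAt ℝ F x)
    (hG : DifferentiableAt ℝ G x) :
    divg (fun y => F y + G y) x = divg F x + divg G x := by
  rw [divg_eq_sum_inner_fderiv (hF.fun_add hG), divg_eq_sum_inner_fderiv hF,
    divg_eq_sum_inner_fderiv hG, ← Finset.sum_add_distrib, fderiv_fun_add hF hG]
  simp only [add_apply, inner_add_left]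

theorem divg_sub {F G : E → E} {x : E} (hF : DifferentiableAt ℝ F x)
    (hG : DifferentiableAt ℝ G x) :
    divg (fun y => F y - G y) x = divg F x - divg G x := by
  rw [divg_eq_sum_inner_fderiv (hF.fun_sub hG), divg_eq_sum_inner_fderiv hF,
    divg_eq_sum_inner_fderiv hG, ← Finset.sum_sub_distrib, fderiv_fun_sub hF hG]
  simp only [sub_apply, inner_sub_left]

theorem divg_smul {f : E → ℝ} {V : E → E} {x : E} (hf : DifferentiableAt ℝ f x)
    (hV : DifferentiableAt ℝ V x) :
    divg (fun y => f y • V y) x = f x * divg V x + fderiv ℝ f x (V x) := by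
  rw [divg_eq_sum_inner_fderiv (hf.fun_smul hV), divg_eq_sum_inner_fderiv hV,
    fderiv_fun_smul hf hV, Finset.mul_sum]
  conv_rhs => rw [← (EuclideanSpace.basisFun (Fin d) ℝ).sum_repr (V x)]
  simp only [add_apply, inner_add_left, smul_apply, real_inner_smul_left,
    ContinuousLinearMap.smulRight_apply, Finset.sum_add_distrib, map_sum, map_smul]
  congr 1
  refine Finset.sum_congr rfl fun i _ => ?_
  simp [EuclideanSpace.inner_single_right, mul_comm]

theorem divg_id (x : E) : divg (fun y => y) x = d := by
  rw [divg_eq_sum_inner_fderiv differentiableAt_fun_id, fderiv_fun_id]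
  simp

theorem divg_gradient (u : E → ℝ) : divg (∇ u) = lap u := by
  ext x
  simp only [divg, lap, inner_gradient_left]

theorem ContDiffAt.gradient {u : E → ℝ} {x : E} {n : WithTop ℕ∞}
    (hu : ContDiffAt ℝ (n + 1) u x) : ContDiffAt ℝ n (∇ u) x :=
  (toDual ℝ E).symm.toContinuousLinearEquiv.contDiff.contDiffAt.comp x (hu.fderiv_right le_rfl)

theorem inner_fderiv_gradient {u : E → ℝ} {x : E} (hu : DifferentiableAt ℝ (fderiv ℝ u) x)
    (v w : E) : ⟪fderiv ℝ (∇ u) x v, w⟫ = fderiv ℝ (fderiv ℝ u) x v w := by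
  have hL : HasFDerivAt (∇ u)
      ((toDual ℝ E).symm.toContinuousLinearEquiv.toContinuousLinearMap.comp
        (fderiv ℝ (fderiv ℝ u) x)) x :=
    (toDual ℝ E).symm.toContinuousLinearEquiv.hasFDerivAt.comp x hu.hasFDerivAt
  rw [hL.fderiv]
  exact toDual_symm_apply

theorem inner_fderiv_gradient_comm {u : E → ℝ} {x : E} (hu : ContDiffAt ℝ 2 u x) (v w : E) :
    ⟪fderiv ℝ (∇ u) x v, w⟫ = ⟪v, fderiv ℝ (∇ u) x w⟫ := by
  have hu' : DifferentiableAt ℝ (fderiv ℝ u) x :=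
    (hu.fderiv_right (m := 1) le_rfl).differentiableAt one_ne_zero
  rw [← real_inner_comm v, inner_fderiv_gradient hu', inner_fderiv_gradient hu',
    hu.isSymmSndFDerivAt (by simp)]

def rellichField (φ ψ : E → ℝ) (y : E) : E :=
  ⟪y, ∇ φ y⟫ • ∇ ψ y + ⟪y, ∇ ψ y⟫ • ∇ φ y - ⟪∇ φ y, ∇ ψ y⟫ • y

theorem divg_rellichField {φ ψ : E → ℝ} {x : E} (hφ : ContDiffAt ℝ 2 φ x)
    (hψ : ContDiffAt ℝ 2 ψ x) :
    divg (rellichField φ ψ) x =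
      ⟪x, ∇ φ x⟫ * lap ψ x + ⟪x, ∇ ψ x⟫ * lap φ x + (2 - d) * ⟪∇ φ x, ∇ ψ x⟫ := by
  have hgφ : DifferentiableAt ℝ (∇ φ) x := (hφ.gradient (n := 1)).differentiableAt one_ne_zero
  have hgψ : DifferentiableAt ℝ (∇ ψ) x := (hψ.gradient (n := 1)).differentiableAt one_ne_zero
  unfold rellichField
  rw [divg_sub (by fun_prop) (by fun_prop), divg_add (by fun_prop) (by fun_prop),
    divg_smul (by fun_prop) (by fun_prop), divg_smul (by fun_prop) (by fun_prop),
    divg_smul (by fun_prop) (by fun_prop), divg_gradient, divg_gradient, divg_id,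
    fderiv_inner_apply ℝ (by fun_prop) (by fun_prop),
    fderiv_inner_apply ℝ (by fun_prop) (by fun_prop),
    fderiv_inner_apply ℝ (by fun_prop) (by fun_prop)]
  simp only [fderiv_fun_id, ContinuousLinearMap.id_apply]
  -- the Hessian terms cancel because second derivatives are symmetric
  linear_combination - inner_fderiv_gradient_comm hφ x (∇ ψ x)
    + real_inner_comm (∇ φ x) (∇ ψ x) - inner_fderiv_gradient_comm hψ x (∇ φ x)
    - real_inner_comm (fderiv ℝ (∇ ψ) x x) (∇ φ x)

theorem inner_rellichField_of_gradient_eq_smul {φ ψ : E → ℝ} {x ν : E}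
    (hφ : ∇ φ x = ⟪ν, ∇ φ x⟫ • ν) (hψ : ∇ ψ x = ⟪ν, ∇ ψ x⟫ • ν) :
    ⟪rellichField φ ψ x, ν⟫ = ⟪x, ν⟫ * ⟪ν, ∇ φ x⟫ * ⟪ν, ∇ ψ x⟫ := by
  set a := ⟪ν, ∇ φ x⟫
  set b := ⟪ν, ∇ ψ x⟫
  -- `ν` is not assumed to be a unit vector; `hφ` gives `‖ν‖ = 1` unless `a = 0`
  have ha : a = a * ⟪ν, ν⟫ := by
    calc a = ⟪ν, a • ν⟫ := by rw [← hφ]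
      _ = a * ⟪ν, ν⟫ := real_inner_smul_right _ _ _
  unfold rellichField
  rw [hφ, hψ]
  simp only [inner_add_left, inner_sub_left, real_inner_smul_left, real_inner_smul_right]
  linear_combination -(b * ⟪x, ν⟫) * ha

/-- The lower-order coefficients are chosen so that, for eigenfunctions with eigenvalues
`Eφ, Eψ`, all terms involving `∇φ, ∇ψ` cancel in the divergence. -/
def pohozaevField (φ ψ : E → ℝ) (Eφ Eψ : ℝ) (y : E) : E :=
  rellichField φ ψ y
    + (((d - 2) / 2 - (Eφ - Eψ) / 4 * ‖y‖ ^ 2) * ψ y) • ∇ φ y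
    + (((d - 2) / 2 + (Eφ - Eψ) / 4 * ‖y‖ ^ 2) * φ y) • ∇ ψ y
    + ((Eφ + Eψ) / 2 * (φ y * ψ y)) • y

theorem contDiffAt_pohozaevField {φ ψ : E → ℝ} {x : E} (hφ : ContDiffAt ℝ 2 φ x)
    (hψ : ContDiffAt ℝ 2 ψ x) (Eφ Eψ : ℝ) : ContDiffAt ℝ 1 (pohozaevField φ ψ Eφ Eψ) x := by
  have hgφ : ContDiffAt ℝ 1 (∇ φ) x := hφ.gradient
  have hgψ : ContDiffAt ℝ 1 (∇ ψ) x := hψ.gradient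
  have hsq : ContDiffAt ℝ 1 (fun y : E => ‖y‖ ^ 2) x := (contDiff_norm_sq ℝ).contDiffAt
  have hφ1 : ContDiffAt ℝ 1 φ x := hφ.of_le (by norm_num)
  have hψ1 : ContDiffAt ℝ 1 ψ x := hψ.of_le (by norm_num)
  unfold pohozaevField rellichField
  fun_prop

theorem divg_pohozaevField {φ ψ : E → ℝ} {x : E} {Eφ Eψ : ℝ} (hφ : ContDiffAt ℝ 2 φ x)
    (hψ : ContDiffAt ℝ 2 ψ x) (hφE : lap φ x = -Eφ * φ x) (hψE : lap ψ x = -Eψ * ψ x) :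
    divg (pohozaevField φ ψ Eφ Eψ) x
      = (Eφ + Eψ) * (φ x * ψ x) + (Eφ - Eψ) ^ 2 / 4 * (‖x‖ ^ 2 * (φ x * ψ x)) := by
  have hgφ : DifferentiableAt ℝ (∇ φ) x := (hφ.gradient (n := 1)).differentiableAt one_ne_zero
  have hgψ : DifferentiableAt ℝ (∇ ψ) x := (hψ.gradient (n := 1)).differentiableAt one_ne_zero
  have hsq : DifferentiableAt ℝ (fun y : E => ‖y‖ ^ 2) x :=
    (contDiff_norm_sq ℝ).contDiffAt.differentiableAt two_ne_zero
  have hφ1 : DifferentiableAt ℝ φ x := hφ.differentiableAt two_ne_zero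
  have hψ1 : DifferentiableAt ℝ ψ x := hψ.differentiableAt two_ne_zero
  have hR : DifferentiableAt ℝ (rellichField φ ψ) x := by unfold rellichField; fun_prop
  unfold pohozaevField
  rw [divg_add (by fun_prop) (by fun_prop), divg_add (by fun_prop) (by fun_prop),
    divg_add (by fun_prop) (by fun_prop), divg_rellichField hφ hψ,
    divg_smul (by fun_prop) (by fun_prop), divg_smul (by fun_prop) (by fun_prop),
    divg_smul (by fun_prop) (by fun_prop), divg_gradient, divg_gradient, divg_id]
  simp (disch := fun_prop) only [fderiv_fun_mul, fderiv_fun_sub, fderiv_fun_add,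
    fderiv_fun_const, fderiv_norm_sq_apply, Pi.zero_apply, add_apply, sub_apply, smul_apply,
    zero_apply, smul_eq_mul, nsmul_eq_mul, innerSL_apply_apply, ← inner_gradient_left, hφE, hψE]
  rw [real_inner_comm (∇ φ x) (∇ ψ x), real_inner_comm x (∇ φ x), real_inner_comm x (∇ ψ x)]
  ring

theorem inner_pohozaevField_of_dirichlet {φ ψ : E → ℝ} {x ν : E} (Eφ Eψ : ℝ)
    (hφ0 : φ x = 0) (hψ0 : ψ x = 0)
    (hφ : ∇ φ x = ⟪ν, ∇ φ x⟫ • ν) (hψ : ∇ ψ x = ⟪ν, ∇ ψ x⟫ • ν) :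
    ⟪pohozaevField φ ψ Eφ Eψ x, ν⟫ = ⟪x, ν⟫ * ⟪ν, ∇ φ x⟫ * ⟪ν, ∇ ψ x⟫ := by
  simp only [pohozaevField, inner_add_left, real_inner_smul_left, hφ0, hψ0, mul_zero, zero_mul,
    add_zero]
  exact inner_rellichField_of_gradient_eq_smul hφ hψ

end Euclidean

theorem abs_setIntegral_mul_mul_le {α : Type*} [MeasurableSpace α] {μ : Measure α} {s : Set α}
    (hs : MeasurableSet s) {w f g : α → ℝ} {C : ℝ} (hw : ∀ x ∈ s, |w x| ≤ C)
    (hf : IntegrableOn (fun x => f x ^ 2) s μ) (hg : IntegrableOn (fun x => g x ^ 2) s μ) :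
    |∫ x in s, w x * (f x * g x) ∂μ|
      ≤ C / 2 * ((∫ x in s, f x ^ 2 ∂μ) + ∫ x in s, g x ^ 2 ∂μ) := by
  have hpt : ∀ x ∈ s, ‖w x * (f x * g x)‖ ≤ C / 2 * (f x ^ 2 + g x ^ 2) := fun x hx => by
    have hfg : |f x * g x| ≤ (f x ^ 2 + g x ^ 2) / 2 := by
      rw [abs_mul]
      nlinarith [sq_nonneg (|f x| - |g x|), sq_abs (f x), sq_abs (g x)]
    rw [Real.norm_eq_abs, abs_mul]
    nlinarith [mul_le_mul_of_nonneg_right (hw x hx) (abs_nonneg (f x * g x)),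
      mul_le_mul_of_nonneg_left hfg ((abs_nonneg (w x)).trans (hw x hx))]
  rw [← integral_add hf hg, ← integral_const_mul]
  exact norm_integral_le_of_norm_le ((hf.add hg).const_mul _)
    ((ae_restrict_iff' hs).2 (.of_forall hpt))

theorem dirichlet_quasi_orthogonality_bound_general
    (d : ℕ) (Ω : Set (EuclideanSpace ℝ (Fin d)))
    (hΩo : IsOpen Ω)
    (n : EuclideanSpace ℝ (Fin d) → EuclideanSpace ℝ (Fin d))
    (R : ℝ) (hΩR : Ω ⊆ Metric.closedBall 0 R)
    (hGG : ∀ F : EuclideanSpace ℝ (Fin d) → EuclideanSpace ℝ (Fin d),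
      (∃ U, IsOpen U ∧ closure Ω ⊆ U ∧ ContDiffOn ℝ 1 F U) →
      (∫ x in Ω, divg F x) = ∫ x in frontier Ω, ⟪F x, n x⟫ ∂(μH[(d:ℝ) - 1]))
    (φ ψ : EuclideanSpace ℝ (Fin d) → ℝ) (Eφ Eψ : ℝ)
    (hφr : ∃ U, IsOpen U ∧ closure Ω ⊆ U ∧ ContDiffOn ℝ 2 φ U) (hψr : ∃ U, IsOpen U ∧ closure Ω ⊆ U ∧ ContDiffOn ℝ 2 ψ U)
    (hHφ : ∀ x ∈ Ω, -lap φ x = Eφ * φ x) (hHψ : ∀ x ∈ Ω, -lap ψ x = Eψ * ψ x)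
    (hφnorm : (∫ x in Ω, (φ x) ^ 2) = 1)
    (hψnorm : (∫ x in Ω, (ψ x) ^ 2) = 1)
    (horth : (∫ x in Ω, φ x * ψ x) = 0)
    (hφ0 : ∀ x ∈ frontier Ω, φ x = 0)
    (hφn : ∀ x ∈ frontier Ω, gradient φ x = ⟪n x, gradient φ x⟫ • n x)
    (hψ0 : ∀ x ∈ frontier Ω, ψ x = 0)
    (hψn : ∀ x ∈ frontier Ω, gradient ψ x = ⟪n x, gradient ψ x⟫ • n x) :
    |∫ x in frontier Ω,
        ⟪x, n x⟫ * ⟪n x, gradient φ x⟫ * ⟪n x, gradient ψ x⟫ ∂(μH[(d:ℝ) - 1])|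
      ≤ R ^ 2 / 4 * (Eφ - Eψ) ^ 2 := by
  obtain ⟨Uφ, hUφ, hΩUφ, hφ⟩ := hφr
  obtain ⟨Uψ, hUψ, hΩUψ, hψ⟩ := hψr
  have hφx : ∀ x ∈ Uφ ∩ Uψ, ContDiffAt ℝ 2 φ x := fun x hx => hφ.contDiffAt (hUφ.mem_nhds hx.1)
  have hψx : ∀ x ∈ Uφ ∩ Uψ, ContDiffAt ℝ 2 ψ x := fun x hx => hψ.contDiffAt (hUψ.mem_nhds hx.2)
  have hΩU : Ω ⊆ Uφ ∩ Uψ := subset_closure.trans (Set.subset_inter hΩUφ hΩUψ)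
  have hK : IsCompact (closure Ω) := (Metric.isBounded_closedBall.subset hΩR).isCompact_closure
  have hint (f : EuclideanSpace ℝ (Fin d) → ℝ) (hf : ContinuousOn f (closure Ω)) :
      IntegrableOn f Ω := (hf.integrableOn_compact hK).mono_set subset_closure
  have hφc : ContinuousOn φ (closure Ω) := hφ.continuousOn.mono hΩUφ
  have hψc : ContinuousOn ψ (closure Ω) := hψ.continuousOn.mono hΩUψ
  have hGauss : ∫ x in frontier Ω, ⟪x, n x⟫ * ⟪n x, ∇ φ x⟫ * ⟪n x, ∇ ψ x⟫ ∂(μH[(d:ℝ) - 1])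
      = (Eφ - Eψ) ^ 2 / 4 * ∫ x in Ω, ‖x‖ ^ 2 * (φ x * ψ x) := by
    rw [← setIntegral_congr_fun isClosed_frontier.measurableSet fun x hx =>
        inner_pohozaevField_of_dirichlet Eφ Eψ (hφ0 x hx) (hψ0 x hx) (hφn x hx) (hψn x hx),
      ← hGG _ ⟨Uφ ∩ Uψ, hUφ.inter hUψ, Set.subset_inter hΩUφ hΩUψ, fun x hx =>
        (contDiffAt_pohozaevField (hφx x hx) (hψx x hx) Eφ Eψ).contDiffWithinAt⟩,
      setIntegral_congr_fun hΩo.measurableSet fun x hx =>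
        divg_pohozaevField (hφx x (hΩU hx)) (hψx x (hΩU hx)) (by linarith [hHφ x hx])
          (by linarith [hHψ x hx]),
      integral_add ((hint (fun x => φ x * ψ x) (by fun_prop)).const_mul _)
        ((hint (fun x => ‖x‖ ^ 2 * (φ x * ψ x)) (by fun_prop)).const_mul _),
      integral_const_mul, integral_const_mul, horth, mul_zero, zero_add]
  have hw (x : EuclideanSpace ℝ (Fin d)) (hx : x ∈ Ω) : |‖x‖ ^ 2| ≤ R ^ 2 := by
    rw [abs_of_nonneg (by positivity)]
    exact pow_le_pow_left₀ (norm_nonneg x) (mem_closedBall_zero_iff.1 (hΩR hx)) 2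
  have hbound := abs_setIntegral_mul_mul_le (f := φ) (g := ψ) hΩo.measurableSet hw
    (hint _ (by fun_prop)) (hint _ (by fun_prop))
  rw [hφnorm, hψnorm] at hbound
  rw [hGauss, abs_mul, abs_of_nonneg (by positivity)]
  calc _ ≤ (Eφ - Eψ) ^ 2 / 4 * R ^ 2 := by gcongr; linarith
    _ = _ := by ring

theorem dirichlet_quasi_orthogonality_bound
    (d : ℕ) (hd : 2 ≤ d) (Ω : Set (EuclideanSpace ℝ (Fin d)))
    (hΩo : IsOpen Ω) (hΩb : Bornology.IsBounded Ω)
    (n : EuclideanSpace ℝ (Fin d) → EuclideanSpace ℝ (Fin d))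
    (R : ℝ) (hR : 0 < R) (hΩR : Ω ⊆ Metric.closedBall 0 R)
    (hGG : ∀ F : EuclideanSpace ℝ (Fin d) → EuclideanSpace ℝ (Fin d),
      (∃ U, IsOpen U ∧ closure Ω ⊆ U ∧ ContDiffOn ℝ 1 F U) →
      (∫ x in Ω, divg F x) = ∫ x in frontier Ω, ⟪F x, n x⟫ ∂(μH[(d:ℝ) - 1]))
    (φ ψ : EuclideanSpace ℝ (Fin d) → ℝ) (Eφ Eψ : ℝ)
    (hφr : ∃ U, IsOpen U ∧ closure Ω ⊆ U ∧ ContDiffOn ℝ 2 φ U) (hψr : ∃ U, IsOpen U ∧ closure Ω ⊆ U ∧ ContDiffOn ℝ 2 ψ U)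
    (hHφ : ∀ x ∈ Ω, -lap φ x = Eφ * φ x) (hHψ : ∀ x ∈ Ω, -lap ψ x = Eψ * ψ x)
    (hφnorm : (∫ x in Ω, (φ x) ^ 2) = 1)
    (hψnorm : (∫ x in Ω, (ψ x) ^ 2) = 1)
    (horth : (∫ x in Ω, φ x * ψ x) = 0)
    (hφ0 : ∀ x ∈ frontier Ω, φ x = 0)
    (hφn : ∀ x ∈ frontier Ω, gradient φ x = ⟪n x, gradient φ x⟫ • n x)
    (hψ0 : ∀ x ∈ frontier Ω, ψ x = 0)
    (hψn : ∀ x ∈ frontier Ω, gradient ψ x = ⟪n x, gradient ψ x⟫ • n x) :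
    |∫ x in frontier Ω,
        ⟪x, n x⟫ * ⟪n x, gradient φ x⟫ * ⟪n x, gradient ψ x⟫ ∂(μH[(d:ℝ) - 1])|
      ≤ R ^ 2 / 4 * (Eφ - Eψ) ^ 2 :=
  dirichlet_quasi_orthogonality_bound_general d Ω hΩo n R hΩR hGG φ ψ Eφ Eψ hφr hψr hHφ hHψ hφnorm
    hψnorm horth hφ0 hφn hψ0 hψn
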